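/- arXiv:math/0407440 — 2 statements merged into one kernel-verified Lean document; each statement's English description precedes it below -/
import Mathlib

section
/- Suppose α is an ordinal with 3 ≤ α ≤ κ and I_{κ,λ}⁺ →_{κ,κ} (I_{κ,λ}⁺; α)². Then σ < non̄_κ(J⁺ → (J⁺, α)²) for every σ ∈ K(κ,λ); that is, for every σ ∈ K(κ,λ), every ideal J on κ with cof̄(J) ≤ σ satisfies J⁺ → (J⁺, α)². -/
open Cardinal Set

namespace PaperFormal

noncomputable section

/-- The least (small) cardinality of a family `F : Set X` satisfying `P`. -/
def leastCard {X : Type 1} (P : Set X → Prop) : Cardinal.{0} :=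
  sInf {c : Cardinal.{0} | ∃ F : Set X, P F ∧ Cardinal.lift.{1} c = #F}

/-- The collection of (codings of) functions from `κ` to `κ`. -/
def funOn (κ : Cardinal.{0}) : Set (Ordinal.{0} → Ordinal.{0}) :=
  {f | ∀ α < κ.ord, f α < κ.ord}

/-- The unequality number `U_κ`. -/
def uneq (κ : Cardinal.{0}) : Cardinal.{0} :=
  leastCard fun F : Set (Ordinal.{0} → Ordinal.{0}) => F ⊆ funOn κ ∧
    ∀ g ∈ funOn κ, ∃ f ∈ F, {α | α < κ.ord ∧ f α = g α} = ∅

/-- The dominating number `d_κ`. -/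
def domNum (κ : Cardinal.{0}) : Cardinal.{0} :=
  leastCard fun F : Set (Ordinal.{0} → Ordinal.{0}) => F ⊆ funOn κ ∧
    ∀ g ∈ funOn κ, ∃ f ∈ F, ∀ α < κ.ord, g α < f α

/-- The number `d̄_κ`. -/
def domBar (κ : Cardinal.{0}) : Cardinal.{0} :=
  leastCard fun X : Set (Ordinal.{0} → Ordinal.{0}) => X ⊆ funOn κ ∧
    ∀ g ∈ funOn κ, ∃ x ⊆ X, x.Nonempty ∧ #x < Cardinal.lift.{1} κ ∧
      ∀ α < κ.ord, g α < sSup {o | ∃ f ∈ x, f α = o}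

/-- The generalized Cantor space `^ρ2`, with points coded as subsets of `Iio ρ.ord`. -/
def cantor (ρ : Cardinal.{0}) : Set (Set Ordinal.{0}) := {x | x ⊆ Iio ρ.ord}

/-- A forcing condition: a pair `(a, t)` with `t ⊆ a ⊆ Iio ρ.ord` and `|a| < ν`. -/
def IsCond (ν ρ : Cardinal.{0}) (a t : Set Ordinal.{0}) : Prop :=
  a ⊆ Iio ρ.ord ∧ t ⊆ a ∧ #a < Cardinal.lift.{1} ν

/-- The basic open set determined by a condition. -/
def basicOpen (ρ : Cardinal.{0}) (a t : Set Ordinal.{0}) : Set (Set Ordinal.{0}) :=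
  {x | x ⊆ Iio ρ.ord ∧ x ∩ a = t}

/-- Dense open subsets of `^ρ2` (for the `<ν`-support topology). -/
def DenseOpen (ν ρ : Cardinal.{0}) (D : Set (Set Ordinal.{0})) : Prop :=
  D ⊆ cantor ρ ∧
  (∀ x ∈ D, ∃ a t, IsCond ν ρ a t ∧ x ∈ basicOpen ρ a t ∧ basicOpen ρ a t ⊆ D) ∧
  (∀ a t, IsCond ν ρ a t → (basicOpen ρ a t ∩ D).Nonempty)

/-- Members of `M_{ν,ρ}`. -/
def Meager (ν ρ : Cardinal.{0}) (W : Set (Set Ordinal.{0})) : Prop :=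
  W ⊆ cantor ρ ∧ ∃ X : Set (Set (Set Ordinal.{0})), X.Nonempty ∧
    #X ≤ Cardinal.lift.{1} ν ∧ (∀ D ∈ X, DenseOpen ν ρ D) ∧ W ∩ ⋂₀ X = ∅

/-- The covering number for category `cov(M_{ν,ρ})`. -/
def covM (ν ρ : Cardinal.{0}) : Cardinal.{0} :=
  leastCard fun Y : Set (Set (Set Ordinal.{0})) =>
    (∀ W ∈ Y, Meager ν ρ W) ∧ ⋃₀ Y = cantor ρ

/-- A (`κ`-complete) ideal on `κ`. -/
structure IdealK (κ : Cardinal.{0}) where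
  mem : Set (Set Ordinal.{0})
  subset_iio : ∀ A ∈ mem, A ⊆ Iio κ.ord
  singleton_mem : ∀ α < κ.ord, {α} ∈ mem
  subset_mem : ∀ A ∈ mem, ∀ B ⊆ A, B ∈ mem
  sUnion_mem : ∀ X : Set (Set Ordinal.{0}), X ⊆ mem → #X < Cardinal.lift.{1} κ → ⋃₀ X ∈ mem
  ne_top : Iio κ.ord ∉ mem

/-- `J⁺`, the sets (⊆ κ) not in the ideal. -/
def IdealK.plus {κ : Cardinal.{0}} (J : IdealK κ) : Set (Set Ordinal.{0}) :=
  {A | A ⊆ Iio κ.ord ∧ A ∉ J.mem}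

/-- `cof(J)`. -/
def IdealK.cof {κ : Cardinal.{0}} (J : IdealK κ) : Cardinal.{0} :=
  leastCard fun X : Set (Set Ordinal.{0}) =>
    X ⊆ J.mem ∧ ∀ A, A ∈ J.mem ↔ ∃ B ∈ X, A ⊆ B

/-- `cof̄(J)`. -/
def IdealK.cofBar {κ : Cardinal.{0}} (J : IdealK κ) : Cardinal.{0} :=
  leastCard fun X : Set (Set Ordinal.{0}) =>
    X ⊆ J.mem ∧ ∀ A ∈ J.mem, ∃ x ⊆ X, #x < Cardinal.lift.{1} κ ∧ A ⊆ ⋃₀ x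

/-- `non_κ(P)`. -/
def nonK (κ : Cardinal.{0}) (P : IdealK κ → Prop) : Cardinal.{0} :=
  sInf {c | ∃ J : IdealK κ, J.cof = c ∧ ¬ P J}

/-- `non̄_κ(P)`. -/
def nonBarK (κ : Cardinal.{0}) (P : IdealK κ → Prop) : Cardinal.{0} :=
  sInf {c | ∃ J : IdealK κ, J.cofBar = c ∧ ¬ P J}

/-- Weak `P`-point. -/
def WeakPPoint {κ : Cardinal.{0}} (J : IdealK κ) : Prop :=
  ∀ A ∈ J.plus, ∀ f : Ordinal.{0} → Ordinal.{0},
    (∀ α ∈ A, f α < κ.ord) → (∀ β, {α ∈ A | f α = β} ∈ J.mem) →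
    ∃ B ∈ J.plus, B ⊆ A ∧ ∀ β, #{α ∈ B | f α = β} < Cardinal.lift.{1} κ

/-- Weak `Q`-point. -/
def WeakQPoint {κ : Cardinal.{0}} (J : IdealK κ) : Prop :=
  ∀ A ∈ J.plus, ∀ g ∈ funOn κ,
    ∃ B ∈ J.plus, B ⊆ A ∧ ∀ α ∈ B, ∀ β ∈ B, α < β → g α < β

/-- Weakly selective ideal. -/
def WeaklySelective {κ : Cardinal.{0}} (J : IdealK κ) : Prop :=
  WeakPPoint J ∧ WeakQPoint J

/-- Weak semi-`Q`-point. -/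
def WeakSemiQPoint {κ : Cardinal.{0}} (J : IdealK κ) : Prop :=
  ∀ A ∈ J.plus, ∀ f : Ordinal.{0} → Ordinal.{0},
    (∀ α ∈ A, f α < κ.ord) →
    (∀ β, #{α ∈ A | f α = β} < Cardinal.lift.{1} κ) →
    ∃ C ∈ J.plus, C ⊆ A ∧ ∀ β < κ.ord, #{α ∈ C | f α = β} ≤ Cardinal.lift.{1} β.card

/-- `P_κ(λ)`, coded as the small subsets of `Iio λ.ord`. -/
def smallSet (κ lam : Cardinal.{0}) : Set (Set Ordinal.{0}) :=
  {a | a ⊆ Iio lam.ord ∧ #a < Cardinal.lift.{1} κ}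

/-- The ideal `I_{κ,λ}` of noncofinal subsets of `P_κ(λ)`. -/
def Ikl (κ lam : Cardinal.{0}) : Set (Set (Set Ordinal.{0})) :=
  {A | A ⊆ smallSet κ lam ∧ ∃ a ∈ smallSet κ lam, ∀ b ∈ A, ¬ a ⊆ b}

/-- A (`κ`-complete fine) ideal on `P_κ(λ)`. -/
structure IdealP (κ lam : Cardinal.{0}) where
  mem : Set (Set (Set Ordinal.{0}))
  subset_pk : ∀ A ∈ mem, A ⊆ smallSet κ lam
  fine : Ikl κ lam ⊆ mem
  subset_mem : ∀ A ∈ mem, ∀ B ⊆ A, B ∈ mem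
  sUnion_mem : ∀ X : Set (Set (Set Ordinal.{0})), X ⊆ mem →
    #X < Cardinal.lift.{1} κ → ⋃₀ X ∈ mem
  ne_top : smallSet κ lam ∉ mem

/-- `H⁺` computed from the underlying collection `Hm` of an ideal on `P_κ(λ)`. -/
def plusOf (κ lam : Cardinal.{0}) (Hm : Set (Set (Set Ordinal.{0}))) :
    Set (Set (Set Ordinal.{0})) :=
  {A | A ⊆ smallSet κ lam ∧ A ∉ Hm}

/-- `H⁺`. -/
def IdealP.plus {κ lam : Cardinal.{0}} (H : IdealP κ lam) : Set (Set (Set Ordinal.{0})) :=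
  plusOf κ lam H.mem

/-- `cof(H)`. -/
def IdealP.cof {κ lam : Cardinal.{0}} (H : IdealP κ lam) : Cardinal.{0} :=
  leastCard fun X : Set (Set (Set Ordinal.{0})) =>
    X ⊆ H.mem ∧ ∀ A, A ∈ H.mem ↔ ∃ B ∈ X, A ⊆ B

/-- `cof̄(H)`. -/
def IdealP.cofBar {κ lam : Cardinal.{0}} (H : IdealP κ lam) : Cardinal.{0} :=
  leastCard fun X : Set (Set (Set Ordinal.{0})) =>
    X ⊆ H.mem ∧ ∀ A ∈ H.mem, ∃ x ⊆ X, #x < Cardinal.lift.{1} κ ∧ A ⊆ ⋃₀ x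

/-- `d^κ_{κ,λ}`. -/
def domP (κ lam : Cardinal.{0}) : Cardinal.{0} :=
  leastCard fun F : Set (Ordinal.{0} → Set Ordinal.{0}) =>
    (∀ f ∈ F, ∀ α < κ.ord, f α ∈ smallSet κ lam) ∧
    ∀ g : Ordinal.{0} → Set Ordinal.{0}, (∀ α < κ.ord, g α ∈ smallSet κ lam) →
      ∃ f ∈ F, ∀ α < κ.ord, g α ⊆ f α

/-- A maximal almost disjoint family of size `≥ κ` for `H` (a member of `M_H^{≥κ}`). -/
def IsMad {κ lam : Cardinal.{0}} (H : IdealP κ lam) (Q : Set (Set (Set Ordinal.{0}))) : Prop :=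
  Q ⊆ H.plus ∧ Cardinal.lift.{1} κ ≤ #Q ∧
  (∀ A ∈ Q, ∀ B ∈ Q, A ≠ B → A ∩ B ∈ H.mem) ∧
  ∀ C ∈ H.plus, ∃ A ∈ Q, A ∩ C ∈ H.plus

/-- The (small) cardinal `c` with `lift c = c'`, used to pull `λ^{<κ} = |P_κ(λ)|` down. -/
def downCard (c : Cardinal.{1}) : Cardinal.{0} :=
  sInf {d : Cardinal.{0} | Cardinal.lift.{1} d = c}

open Classical in
/-- The number `a_H`. -/
def aNum {κ lam : Cardinal.{0}} (H : IdealP κ lam) : Cardinal.{0} :=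
  if ∃ Q, IsMad H Q then sInf {c | ∃ Q, IsMad H Q ∧ Cardinal.lift.{1} c = #Q}
  else 2 ^ Order.succ (downCard #(smallSet κ lam))

/-- Weak `π`-point. -/
def WeakPiPoint {κ lam : Cardinal.{0}} (H : IdealP κ lam) : Prop :=
  ∀ f : Ordinal.{0} → Set (Set Ordinal.{0}), (∀ α < κ.ord, f α ∈ H.mem) →
    ∀ A ∈ H.plus, ∃ B ∈ H.plus, B ⊆ A ∧ ∀ α < κ.ord, B ∩ f α ∈ Ikl κ lam

/-- `∪(a ∩ κ)`. -/
def supK (κ : Cardinal.{0}) (a : Set Ordinal.{0}) : Ordinal.{0} :=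
  sSup (a ∩ Iio κ.ord)

/-- The relation `a ≺ b`. -/
def prec (κ : Cardinal.{0}) (a b : Set Ordinal.{0}) : Prop :=
  a ⊆ b ∧ supK κ a < supK κ b

/-- `[A]_κ²`. -/
def pairsK (κ : Cardinal.{0}) (A : Set (Set Ordinal.{0})) : Set (Ordinal.{0} × Set Ordinal.{0}) :=
  {p | ∃ a ∈ A, ∃ b ∈ A, supK κ a < supK κ b ∧ p = (supK κ a, b)}

/-- `[A]_≺²`. -/
def pairsPrec (κ : Cardinal.{0}) (A : Set (Set Ordinal.{0})) :
    Set (Ordinal.{0} × Set Ordinal.{0}) :=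
  {p | ∃ a ∈ A, ∃ b ∈ A, prec κ a b ∧ p = (supK κ a, b)}

/-- `[A]_{κ,κ}²`. -/
def pairsKK (κ : Cardinal.{0}) (A : Set (Set Ordinal.{0})) : Set (Ordinal.{0} × Ordinal.{0}) :=
  {p | ∃ a ∈ A, ∃ b ∈ A, supK κ a < supK κ b ∧ p = (supK κ a, supK κ b)}

/-- `S` is a set of ordinals of order type `α`. -/
def OrdType (S : Set Ordinal.{0}) (α : Ordinal.{0}) : Prop :=
  ∃ e : Ordinal.{0} → Ordinal.{0},
    (∀ i < α, ∀ j < α, i < j → e i < e j) ∧ e '' Iio α = S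

/-- `(B, ≺)` has order type `α`. -/
def OrdTypePrec (κ : Cardinal.{0}) (B : Set (Set Ordinal.{0})) (α : Ordinal.{0}) : Prop :=
  ∃ e : Ordinal.{0} → Set Ordinal.{0},
    (∀ i < α, ∀ j < α, i < j → prec κ (e i) (e j)) ∧ e '' Iio α = B

/-- The partition relation `κ → (κ, θ)²`. -/
def ArrowKTheta (κ : Cardinal.{0}) (θ : Ordinal.{0}) : Prop :=
  ∀ f : Ordinal.{0} → Ordinal.{0} → Fin 2, ∃ A ⊆ Iio κ.ord,
    (OrdType A κ.ord ∧ ∀ α ∈ A, ∀ β ∈ A, α < β → f α β = 0) ∨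
    (OrdType A θ ∧ ∀ α ∈ A, ∀ β ∈ A, α < β → f α β = 1)

/-- `κ` is weakly compact. -/
def WeaklyCompact (κ : Cardinal.{0}) : Prop :=
  ∀ f : Ordinal.{0} → Ordinal.{0} → Fin 2, ∃ A ⊆ Iio κ.ord,
    OrdType A κ.ord ∧ ∃ i, ∀ α ∈ A, ∀ β ∈ A, α < β → f α β = i

/-- The partition relation `J⁺ → (J⁺, α)²` for an ideal on `κ`. -/
def ArrowJ {κ : Cardinal.{0}} (J : IdealK κ) (α : Ordinal.{0}) : Prop :=
  ∀ A ∈ J.plus, ∀ f : Ordinal.{0} → Ordinal.{0} → Fin 2,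
    ∃ B ⊆ A, (B ∈ J.plus ∧ ∀ β ∈ B, ∀ γ ∈ B, β < γ → f β γ = 0) ∨
             (OrdType B α ∧ ∀ β ∈ B, ∀ γ ∈ B, β < γ → f β γ = 1)

/-- The square bracket relation `J⁺ → [J⁺]_ρ²` for an ideal on `κ`. -/
def SqBrJ {κ : Cardinal.{0}} (J : IdealK κ) (ρ : Cardinal.{0}) : Prop :=
  ∀ A ∈ J.plus, ∀ f : Ordinal.{0} → Ordinal.{0} → Ordinal.{0},
    (∀ β ∈ A, ∀ γ ∈ A, β < γ → f β γ < ρ.ord) →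
    ∃ B ∈ J.plus, B ⊆ A ∧ {ξ | ∃ β ∈ B, ∃ γ ∈ B, β < γ ∧ f β γ = ξ} ≠ Iio ρ.ord

/-- `H⁺ →_κ (H⁺, α)²`. -/
def ArrowP (κ lam : Cardinal.{0}) (Hm : Set (Set (Set Ordinal.{0}))) (α : Ordinal.{0}) : Prop :=
  ∀ F : Ordinal.{0} → Set Ordinal.{0} → Fin 2, ∀ A ∈ plusOf κ lam Hm,
    ∃ B ⊆ A, (B ∈ plusOf κ lam Hm ∧ ∀ p ∈ pairsK κ B, F p.1 p.2 = 0) ∨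
             (OrdTypePrec κ B α ∧ ∀ p ∈ pairsK κ B, F p.1 p.2 = 1)

/-- `H⁺ →_{κ,κ} (H⁺, α)²`. -/
def ArrowPKK (κ lam : Cardinal.{0}) (Hm : Set (Set (Set Ordinal.{0}))) (α : Ordinal.{0}) : Prop :=
  ∀ F : Ordinal.{0} → Ordinal.{0} → Fin 2, ∀ A ∈ plusOf κ lam Hm,
    ∃ B ⊆ A, (B ∈ plusOf κ lam Hm ∧ ∀ p ∈ pairsKK κ B, F p.1 p.2 = 0) ∨
             (OrdTypePrec κ B α ∧ ∀ p ∈ pairsKK κ B, F p.1 p.2 = 1)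

/-- `H⁺ →_{κ,κ} (H⁺; α)²`. -/
def ArrowPKKsemi (κ lam : Cardinal.{0}) (Hm : Set (Set (Set Ordinal.{0}))) (α : Ordinal.{0}) :
    Prop :=
  ∀ F : Ordinal.{0} → Ordinal.{0} → Fin 2, ∀ A ∈ plusOf κ lam Hm,
    ∃ B ⊆ A, (B ∈ plusOf κ lam Hm ∧ ∀ p ∈ pairsKK κ B, F p.1 p.2 = 0) ∨
             (OrdType {o | ∃ a ∈ B, supK κ a = o} α ∧ ∀ p ∈ pairsKK κ B, F p.1 p.2 = 1)

/-- `H⁺ →_κ (H⁺)²`. -/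
def ArrowPConst (κ lam : Cardinal.{0}) (Hm : Set (Set (Set Ordinal.{0}))) : Prop :=
  ∀ F : Ordinal.{0} → Set Ordinal.{0} → Fin 2, ∀ A ∈ plusOf κ lam Hm,
    ∃ B ∈ plusOf κ lam Hm, B ⊆ A ∧ ∃ i, ∀ p ∈ pairsK κ B, F p.1 p.2 = i

/-- `H⁺ →_{κ,κ} [H⁺]_ρ²`. -/
def SqBrPKK (κ lam : Cardinal.{0}) (Hm : Set (Set (Set Ordinal.{0}))) (ρ : Cardinal.{0}) : Prop :=
  ∀ F : Ordinal.{0} → Ordinal.{0} → Ordinal.{0},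
    (∀ α β : Ordinal.{0}, α < β → β < κ.ord → F α β < ρ.ord) →
    ∀ A ∈ plusOf κ lam Hm, ∃ B ∈ plusOf κ lam Hm, B ⊆ A ∧
      {ξ | ∃ p ∈ pairsKK κ B, F p.1 p.2 = ξ} ≠ Iio ρ.ord

/-- The class `K(κ,λ)`. -/
def Kset (κ lam : Cardinal.{0}) : Set Cardinal.{0} :=
  {σ | lam ≤ σ ∧ ∃ T ⊆ smallSet κ lam, Cardinal.lift.{1} σ = #T ∧
    ∀ a ∈ smallSet κ lam, #{t ∈ T | t ⊆ a} < Cardinal.lift.{1} κ}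

end

end PaperFormal

/-!
Fix a family `X` witnessing `cof̄(J)` and code its members injectively by elements of `T`, which
is possible since `|X| ≤ σ = |T|`. For `A ∈ J⁺` let `Ã` consist of the `a ∈ P_κ(λ)` with
`supK κ a ∈ A` such that `supK κ a` avoids every `Y ∈ X` whose code is `≺ a`. Fewer than `κ` codes
lie below a given `c`, so the corresponding members of `X` have union in `J` and `A` has a point
above `supK κ c` outside it: `Ã` is cofinal. Apply the hypothesis to `Ã`. If it yields a cofinal
`0`-homogeneous `B ⊆ Ã`, then `supK κ '' B ⊆ A` is `0`-homogeneous and `J`-positive: were it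
covered by fewer than `κ` members of `X`, a member of `B` lying above all their codes would
contradict the definition of `Ã`. Otherwise `supK κ '' B` is `1`-homogeneous of order type `α`.
-/

namespace PaperFormal

universe u

theorem exists_injOn_mapsTo_of_mk_le {α β : Type u} [Nonempty β] {X : Set α} {T : Set β}
    (h : #X ≤ #T) : ∃ φ : α → β, InjOn φ X ∧ MapsTo φ X T := by
  obtain ⟨i⟩ := (Cardinal.le_def X T).1 h
  classical
  refine ⟨Function.extend Subtype.val (fun x => (i x : β)) fun _ => Classical.arbitrary β,
    fun x hx y hy hxy => ?_, fun x hx => ?_⟩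
  · rw [Subtype.val_injective.extend_apply (g := fun x => (i x : β)) _ ⟨x, hx⟩,
      Subtype.val_injective.extend_apply (g := fun x => (i x : β)) _ ⟨y, hy⟩] at hxy
    exact congrArg Subtype.val (i.injective (Subtype.val_injective hxy))
  · rw [Subtype.val_injective.extend_apply (g := fun x => (i x : β)) _ ⟨x, hx⟩]
    exact (i _).2

theorem exists_lift_leastCard_eq {X : Type 1} {P : Set X → Prop} {F : Set X} (hF : P F)
    {c : Cardinal.{0}} (hc : #F ≤ Cardinal.lift.{1} c) :
    ∃ F, P F ∧ Cardinal.lift.{1} (leastCard P) = #F := by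
  obtain ⟨d, hd⟩ := Cardinal.mem_range_lift_of_le hc
  exact csInf_mem (s := {c : Cardinal.{0} | ∃ F : Set X, P F ∧ Cardinal.lift.{1} c = #F})
    ⟨d, F, hF, hd⟩

section Regular

variable {κ : Cardinal.{0}}

theorem sSup_lt_ord_of_mk_lt (hκ : κ.IsRegular) {s : Set Ordinal.{0}}
    (hs : #s < Cardinal.lift.{1} κ) (hb : ∀ o ∈ s, o < κ.ord) : sSup s < κ.ord :=
  Ordinal.sSup_lt_of_lt_cof (by rwa [← Ordinal.lift_cof, hκ.cof_ord]) hb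

theorem mk_sUnion_lt (hκ : κ.IsRegular) {x : Set (Set Ordinal.{0})}
    (hx : #x < Cardinal.lift.{1} κ) (h : ∀ s ∈ x, #s < Cardinal.lift.{1} κ) :
    #(⋃₀ x) < Cardinal.lift.{1} κ := by
  rw [sUnion_eq_biUnion]
  exact (card_biUnion_lt_iff_forall_of_isRegular hκ.lift hx).2 h

theorem one_lt_lift (hκ : κ.IsRegular) : 1 < Cardinal.lift.{1} κ :=
  Cardinal.one_lt_aleph0.trans_le hκ.lift.aleph0_le

theorem mk_insert_lt (hκ : κ.IsRegular) {α : Type 1} {s : Set α} (o : α)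
    (hs : #s < Cardinal.lift.{1} κ) : #(insert o s : Set α) < Cardinal.lift.{1} κ :=
  Cardinal.mk_insert_le.trans_lt <| Cardinal.add_lt_of_lt hκ.lift.aleph0_le hs (one_lt_lift hκ)

theorem mk_Iic_lt (hκ : κ.IsRegular) {β : Ordinal.{0}} (hβ : β < κ.ord) :
    #(Iic β) < Cardinal.lift.{1} κ := by
  rw [← Order.Iio_succ, Cardinal.mk_Iio_ordinal, Cardinal.lift_lt, ← Cardinal.lt_ord]
  exact (Cardinal.isSuccLimit_ord hκ.aleph0_le).succ_lt hβ

theorem supK_lt_ord (hκ : κ.IsRegular) {a : Set Ordinal.{0}} (ha : #a < Cardinal.lift.{1} κ) :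
    supK κ a < κ.ord :=
  sSup_lt_ord_of_mk_lt hκ ((Cardinal.mk_le_mk_of_subset inter_subset_left).trans_lt ha)
    fun _ ho => ho.2

theorem le_supK {a : Set Ordinal.{0}} {o : Ordinal.{0}} (ho : o ∈ a) (hoκ : o < κ.ord) :
    o ≤ supK κ a :=
  le_csSup ⟨κ.ord, fun _ hp => hp.2.le⟩ ⟨ho, hoκ⟩

theorem supK_mono {a b : Set Ordinal.{0}} (hab : a ⊆ b) : supK κ a ≤ supK κ b :=
  csSup_le_csSup' ⟨κ.ord, fun _ hp => hp.2.le⟩ (inter_subset_inter_left _ hab)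

theorem supK_insert {c : Set Ordinal.{0}} {γ : Ordinal.{0}} (hγ : γ < κ.ord)
    (hc : supK κ c < γ) : supK κ (insert γ c) = γ := by
  refine le_antisymm (csSup_le ⟨γ, mem_insert _ _, hγ⟩ ?_) (le_supK (mem_insert _ _) hγ)
  rintro o ⟨rfl | ho, hoκ⟩
  exacts [le_rfl, (le_supK ho hoκ).trans hc.le]

end Regular

namespace IdealK

variable {κ : Cardinal.{0}} (J : IdealK κ)

theorem Iic_mem (hκ : κ.IsRegular) {β : Ordinal.{0}} (hβ : β < κ.ord) : Iic β ∈ J.mem := by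
  rw [← biUnion_of_singleton (Iic β), ← sUnion_image]
  refine J.sUnion_mem _ ?_ (Cardinal.mk_image_le.trans_lt (mk_Iic_lt hκ hβ))
  rintro _ ⟨γ, hγ, rfl⟩
  exact J.singleton_mem γ (lt_of_le_of_lt hγ hβ)

theorem exists_mem_notMem_lt (hκ : κ.IsRegular) {A S : Set Ordinal.{0}} (hA : A ∈ J.plus)
    (hS : S ∈ J.mem) {β : Ordinal.{0}} (hβ : β < κ.ord) : ∃ γ ∈ A, γ ∉ S ∧ β < γ := by
  by_contra! hAS
  have hpair : #({S, Iic β} : Set (Set Ordinal.{0})) < Cardinal.lift.{1} κ :=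
    mk_insert_lt hκ _ (by rw [Cardinal.mk_singleton]; exact one_lt_lift hκ)
  refine hA.2 (J.subset_mem _ (J.sUnion_mem {S, Iic β} ?_ hpair) A fun γ hγ => ?_)
  · rintro _ (rfl | rfl)
    exacts [hS, J.Iic_mem hκ hβ]
  · by_cases hγS : γ ∈ S
    exacts [⟨S, Or.inl rfl, hγS⟩, ⟨Iic β, Or.inr rfl, hAS γ hγ hγS⟩]

theorem exists_cofBar_basis (hκ : κ.IsRegular) :
    ∃ X : Set (Set Ordinal.{0}), (X ⊆ J.mem ∧
      ∀ A ∈ J.mem, ∃ x ⊆ X, #x < Cardinal.lift.{1} κ ∧ A ⊆ ⋃₀ x) ∧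
      Cardinal.lift.{1} J.cofBar = #X := by
  refine exists_lift_leastCard_eq (F := J.mem) (c := 2 ^ κ)
    ⟨le_rfl, fun A hA => ⟨{A}, singleton_subset_iff.2 hA, ?_, subset_sUnion_of_mem rfl⟩⟩ ?_
  · rw [Cardinal.mk_singleton]
    exact one_lt_lift hκ
  · calc #J.mem ≤ #(𝒫 Iio κ.ord) := Cardinal.mk_le_mk_of_subset J.subset_iio
      _ = Cardinal.lift.{1} (2 ^ κ) := by
        rw [Cardinal.mk_powerset, Cardinal.mk_Iio_ordinal, Cardinal.card_ord,
          Cardinal.lift_two_power]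

end IdealK

section SmallSet

variable {κ lam : Cardinal.{0}}

theorem mem_plusOf_Ikl_iff {A : Set (Set Ordinal.{0})} :
    A ∈ plusOf κ lam (Ikl κ lam) ↔
      A ⊆ smallSet κ lam ∧ ∀ c ∈ smallSet κ lam, ∃ b ∈ A, c ⊆ b := by
  refine and_congr_right fun hA => ⟨fun hpos c hc => ?_, fun hcof ⟨_, c, hc, hnot⟩ => ?_⟩
  · by_contra! hnot
    exact hpos ⟨hA, c, hc, hnot⟩
  · obtain ⟨b, hb, hcb⟩ := hcof c hc
    exact hnot b hb hcb

theorem insert_mem_smallSet (hκ : κ.IsRegular) (hκlam : κ ≤ lam) {c : Set Ordinal.{0}}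
    (hc : c ∈ smallSet κ lam) {γ : Ordinal.{0}} (hγ : γ < κ.ord) :
    insert γ c ∈ smallSet κ lam :=
  ⟨insert_subset (hγ.trans_le (Cardinal.ord_le_ord.2 hκlam)) hc.1, mk_insert_lt hκ γ hc.2⟩

theorem sUnion_mem_smallSet (hκ : κ.IsRegular) {x : Set (Set Ordinal.{0})}
    (hx : #x < Cardinal.lift.{1} κ) (hxs : x ⊆ smallSet κ lam) : ⋃₀ x ∈ smallSet κ lam :=
  ⟨sUnion_subset fun _ hs => (hxs hs).1, mk_sUnion_lt hκ hx fun _ hs => (hxs hs).2⟩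

end SmallSet

section AvoidingLift

variable {κ lam : Cardinal.{0}}

def avoidingLift (κ lam : Cardinal.{0}) (A : Set Ordinal.{0}) (X : Set (Set Ordinal.{0}))
    (φ : Set Ordinal.{0} → Set Ordinal.{0}) : Set (Set Ordinal.{0}) :=
  {a ∈ smallSet κ lam | supK κ a ∈ A ∧ ∀ Y ∈ X, prec κ (φ Y) a → supK κ a ∉ Y}

theorem avoidingLift_mem_plusOf (hκ : κ.IsRegular) (hκlam : κ ≤ lam) {J : IdealK κ}
    {A : Set Ordinal.{0}} (hA : A ∈ J.plus) {X : Set (Set Ordinal.{0})} (hX : X ⊆ J.mem)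
    {T : Set (Set Ordinal.{0})}
    (hT : ∀ a ∈ smallSet κ lam, #{t ∈ T | t ⊆ a} < Cardinal.lift.{1} κ)
    {φ : Set Ordinal.{0} → Set Ordinal.{0}} (hφ : InjOn φ X) (hφT : MapsTo φ X T) :
    avoidingLift κ lam A X φ ∈ plusOf κ lam (Ikl κ lam) := by
  refine mem_plusOf_Ikl_iff.2 ⟨fun a ha => ha.1, fun c hc => ?_⟩
  set Xc := {Y ∈ X | φ Y ⊆ c}
  have hXc : #Xc < Cardinal.lift.{1} κ := by
    rw [← Cardinal.mk_image_eq_of_injOn φ Xc (hφ.mono fun _ hY => hY.1)]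
    have himage : φ '' Xc ⊆ {t ∈ T | t ⊆ c} := image_subset_iff.2 fun Y hY => ⟨hφT hY.1, hY.2⟩
    exact (Cardinal.mk_le_mk_of_subset himage).trans_lt (hT c hc)
  obtain ⟨γ, hγA, hγXc, hcγ⟩ := J.exists_mem_notMem_lt hκ hA
    (J.sUnion_mem Xc (fun Y hY => hX hY.1) hXc) (supK_lt_ord hκ hc.2)
  have hγκ : γ < κ.ord := hA.1 hγA
  have hsup : supK κ (insert γ c) = γ := supK_insert hγκ hcγ
  refine ⟨insert γ c, ⟨insert_mem_smallSet hκ hκlam hc hγκ, by rwa [hsup], fun Y hY hprec => ?_⟩,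
    subset_insert γ c⟩
  obtain ⟨hsub, hlt⟩ := hprec
  rw [hsup] at hlt ⊢
  have hφc : φ Y ⊆ c := fun o ho =>
    (hsub ho).resolve_left fun hoγ => (le_supK (hoγ ▸ ho) hγκ).not_gt hlt
  exact fun hγY => hγXc ⟨Y, ⟨hY, hφc⟩, hγY⟩

theorem image_supK_notMem_of_subset_avoidingLift (hκ : κ.IsRegular) (hκlam : κ ≤ lam)
    {J : IdealK κ} {X : Set (Set Ordinal.{0})}
    (hcov : ∀ S ∈ J.mem, ∃ x ⊆ X, #x < Cardinal.lift.{1} κ ∧ S ⊆ ⋃₀ x)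
    {φ : Set Ordinal.{0} → Set Ordinal.{0}} (hφ : MapsTo φ X (smallSet κ lam))
    {A : Set Ordinal.{0}} {B : Set (Set Ordinal.{0})} (hB : B ∈ plusOf κ lam (Ikl κ lam))
    (hBA : B ⊆ avoidingLift κ lam A X φ) : supK κ '' B ∉ J.mem := by
  intro hBJ
  obtain ⟨x, hxX, hx, hBx⟩ := hcov _ hBJ
  set c := ⋃₀ (φ '' x)
  have hc : c ∈ smallSet κ lam :=
    sUnion_mem_smallSet hκ (Cardinal.mk_image_le.trans_lt hx) (hφ.mono_left hxX).image_subset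
  -- the extra point `supK κ c + 1` forces `supK κ c < supK κ a` for the `a ∈ B` chosen above it
  have hδ : supK κ c + 1 < κ.ord :=
    (Cardinal.isSuccLimit_ord hκ.aleph0_le).succ_lt (supK_lt_ord hκ hc.2)
  obtain ⟨a, haB, hca⟩ :=
    (mem_plusOf_Ikl_iff.1 hB).2 _ (insert_mem_smallSet hκ hκlam hc hδ)
  obtain ⟨Y, hYx, haY⟩ := hBx (mem_image_of_mem _ haB)
  have hφYc : φ Y ⊆ c := subset_sUnion_of_mem (mem_image_of_mem φ hYx)
  have hprec : prec κ (φ Y) a := ⟨hφYc.trans ((subset_insert _ _).trans hca), calc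
    supK κ (φ Y) ≤ supK κ c := supK_mono hφYc
    _ < supK κ c + 1 := Order.lt_add_one_iff.2 le_rfl
    _ ≤ supK κ a := le_supK (hca (mem_insert _ _)) hδ⟩
  exact (hBA haB).2.2 Y (hxX hYx) hprec haY

theorem forall_image_supK_of_forall_pairsKK {ι : Type*} {B : Set (Set Ordinal.{0})}
    {f : Ordinal.{0} → Ordinal.{0} → ι} {v : ι} (h : ∀ p ∈ pairsKK κ B, f p.1 p.2 = v) :
    ∀ β ∈ supK κ '' B, ∀ γ ∈ supK κ '' B, β < γ → f β γ = v := by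
  rintro _ ⟨a, ha, rfl⟩ _ ⟨b, hb, rfl⟩ hab
  exact h _ ⟨a, ha, b, hb, hab, rfl⟩

end AvoidingLift

theorem arrowJ_of_arrowPKKsemi_general (κ lam : Cardinal.{0}) (hreg : κ.IsRegular)
    (hlt : κ < lam) (α : Ordinal.{0})
    (h : ArrowPKKsemi κ lam (Ikl κ lam) α) :
    ∀ σ ∈ Kset κ lam, ∀ J : IdealK κ, J.cofBar ≤ σ → ArrowJ J α := by
  rintro σ ⟨-, T, hTsmall, hTcard, hT⟩ J hcof A hA f
  obtain ⟨X, ⟨hXJ, hXcov⟩, hXcard⟩ := J.exists_cofBar_basis hreg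
  obtain ⟨φ, hφinj, hφT⟩ : ∃ φ : Set Ordinal.{0} → Set Ordinal.{0}, InjOn φ X ∧ MapsTo φ X T :=
    exists_injOn_mapsTo_of_mk_le (by rw [← hXcard, ← hTcard]; exact Cardinal.lift_le.2 hcof)
  obtain ⟨B, hBsub, hB⟩ :=
    h f _ (avoidingLift_mem_plusOf hreg hlt.le hA hXJ hT hφinj hφT)
  have hBA : supK κ '' B ⊆ A := image_subset_iff.2 fun a ha => (hBsub ha).2.1
  refine ⟨supK κ '' B, hBA, hB.imp (fun ⟨hBpos, hf0⟩ => ⟨⟨hBA.trans hA.1, ?_⟩,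
    forall_image_supK_of_forall_pairsKK hf0⟩) fun ⟨hBα, hf1⟩ =>
    ⟨hBα, forall_image_supK_of_forall_pairsKK hf1⟩⟩
  exact image_supK_notMem_of_subset_avoidingLift hreg hlt.le hXcov (hφT.mono_right hTsmall)
    hBpos hBsub

/-- Suppose `3 ≤ α ≤ κ` and `I_{κ,λ}⁺ →_{κ,κ} (I_{κ,λ}⁺; α)²`. Then for every
`σ ∈ K(κ,λ)`, every ideal `J` on `κ` with `cof̄(J) ≤ σ` satisfies `J⁺ → (J⁺, α)²`. -/
theorem arrowJ_of_arrowPKKsemi (κ lam : Cardinal.{0}) (hreg : κ.IsRegular) (huc : ℵ₀ < κ)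
    (hlt : κ < lam) (α : Ordinal.{0}) (hα3 : 3 ≤ α) (hακ : α ≤ κ.ord)
    (h : ArrowPKKsemi κ lam (Ikl κ lam) α) :
    ∀ σ ∈ Kset κ lam, ∀ J : IdealK κ, J.cofBar ≤ σ → ArrowJ J α :=
  arrowJ_of_arrowPKKsemi_general κ lam hreg hlt α h

end PaperFormal
end

section
/- Suppose κ is weakly compact. Then H⁺ →_κ (H⁺)² for every ideal H on P_κ(λ) with cof(H) < cov(M_{κ,κ}); that is, for every F : [P_κ(λ)]_κ² → 2 and every A ∈ H⁺ there is B ∈ H⁺ ∩ P(A) on which F is constant on [B]_κ². -/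
open Cardinal Set

/-!
Weak compactness gives the tree property in the following form. Lexicographically monotone
`κ`-sequences of subsets of `κ` converge pointwise (by induction on the coordinate, using
regularity), and `κ → (κ)²` extracts such a subsequence from any `κ`-sequence of distinct sets.
Applied to an injection of `κ` into `𝒫 c`, this shows `2 ^ c < κ` for `c < κ`; so every level of
the tree of traces `F(·, b)|δ` (`b ∈ A`) has fewer than `κ` nodes and one of them is `H`-positive,
and a convergent subsequence of such positive nodes gives a branch `Y` along which all the sets
`{b ∈ A | F(α, b) = Y(α) for α < δ}` are `H`-positive.

A point `x ⊆ κ` selects `b` if `sup (b ∩ κ) ∈ x` and `F(α, b) = Y(α)` for the `α ∈ x` below it.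
For every `C ∈ H`, the `x` selecting some `b ∈ A \ C` form a dense open set. As
`cof(H) < cov(M_{κ,κ})`, some `x` lies in all of these sets for `C` in a cofinal subfamily of `H`,
so the `b ∈ A` selected by `x` form an `H`-positive set on which `F(sup (a ∩ κ), b)` depends only on
`sup (a ∩ κ)`; splitting it according to `Y` gives the homogeneous set.
-/

namespace PaperFormal

open Order

theorem prop_lt_iff {p q : Prop} : p < q ↔ ¬p ∧ q := by
  change ((p → q) ∧ ¬(q → p)) ↔ _
  tauto

section Lex

variable {ι : Type*}

def lexOfSet (U : Set ι) : Lex (ι → Prop) := toLex (· ∈ U)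

theorem lexOfSet_injective : Function.Injective (lexOfSet (ι := ι)) := fun _ _ h =>
  Set.ext fun i => Iff.of_eq (congrFun h i)

variable [LinearOrder ι]

theorem lexOfSet_compl_le_compl {U V : Set ι} (h : lexOfSet U ≤ lexOfSet V) :
    lexOfSet Vᶜ ≤ lexOfSet Uᶜ := by
  rcases h.lt_or_eq with ⟨i, hagree, hi⟩ | h
  · have hi := prop_lt_iff.mp hi
    exact le_of_lt ⟨i, fun j hj => congrArg Not (hagree j hj).symm,
      prop_lt_iff.mpr ⟨not_not.mpr hi.2, hi.1⟩⟩
  · rw [lexOfSet_injective h]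

theorem mem_of_lexOfSet_le {U V : Set ι} {i : ι} (h : lexOfSet U ≤ lexOfSet V)
    (hagree : ∀ j < i, j ∈ U ↔ j ∈ V) (hi : i ∈ U) : i ∈ V := by
  by_contra hV
  exact h.not_gt ⟨i, fun j hj => propext (hagree j hj).symm, prop_lt_iff.mpr ⟨hV, hi⟩⟩

end Lex

theorem StrictMonoOn.le_apply_of_lt {β : Type*} [LinearOrder β] [WellFoundedLT β] {g : β → β}
    {o : β} (hg : StrictMonoOn g (Set.Iio o)) {x : β} (hx : x < o) : x ≤ g x := by
  induction x using WellFoundedLT.induction with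
  | _ x ih =>
    by_contra! h
    exact (ih _ h (h.trans hx)).not_gt (hg (h.trans hx) hx h)

section Stabilization

variable {κ : Cardinal.{0}} {u : Ordinal.{0} → Set Ordinal.{0}}

theorem exists_agree_of_monotoneOn (hreg : κ.IsRegular)
    (hu : MonotoneOn (lexOfSet ∘ u) (Iio κ.ord)) {α : Ordinal.{0}} (hα : α < κ.ord) :
    ∃ ξ < κ.ord, ∀ η ∈ Ico ξ κ.ord, ∀ β ≤ α, β ∈ u η ↔ β ∈ u ξ := by
  induction α using WellFoundedLT.induction with
  | _ α ih =>
  choose Ξ hΞκ hΞ using fun β : Iio α => ih β β.2 (β.2.trans hα)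
  set ξ₀ := ⨆ β, Ξ β
  have hξ₀ : ξ₀ < κ.ord := by
    refine Ordinal.lift_iSup_lt_of_lt_cof ?_ hΞκ
    rw [← Ordinal.lift_cof, hreg.cof_ord, Cardinal.mk_Iio_ordinal, Cardinal.lift_lift,
      Cardinal.lift_lt]
    exact Cardinal.lt_ord.mp (by simpa using hα)
  have below : ∀ η ∈ Ico ξ₀ κ.ord, ∀ γ < α, γ ∈ u η ↔ γ ∈ u ξ₀ := fun η hη γ hγ => by
    have hle : Ξ ⟨γ, hγ⟩ ≤ ξ₀ := Ordinal.le_iSup _ _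
    exact (hΞ _ η ⟨hle.trans hη.1, hη.2⟩ γ le_rfl).trans (hΞ _ ξ₀ ⟨hle, hξ₀⟩ γ le_rfl).symm
  -- past `ξ₀` all terms agree below `α`, so by monotonicity `α` enters them at most once
  by_cases hup : ∃ η₀ ∈ Ico ξ₀ κ.ord, α ∈ u η₀
  · obtain ⟨η₀, hη₀, hαη₀⟩ := hup
    refine ⟨η₀, hη₀.2, fun η hη β hβ => ?_⟩
    have hη' : η ∈ Ico ξ₀ κ.ord := ⟨hη₀.1.trans hη.1, hη.2⟩
    rcases hβ.lt_or_eq with hβ | rfl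
    · exact (below η hη' β hβ).trans (below η₀ hη₀ β hβ).symm
    · refine iff_of_true (mem_of_lexOfSet_le (hu hη₀.2 hη.2 hη.1) (fun γ hγ => ?_) hαη₀) hαη₀
      exact (below η₀ hη₀ γ hγ).trans (below η hη' γ hγ).symm
  · push Not at hup
    refine ⟨ξ₀, hξ₀, fun η hη β hβ => ?_⟩
    rcases hβ.lt_or_eq with hβ | rfl
    · exact below η hη β hβ
    · exact iff_of_false (hup η hη) (hup ξ₀ ⟨le_rfl, hξ₀⟩)

theorem exists_limit_of_monotoneOn_or_antitoneOn (hreg : κ.IsRegular)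
    (hu : MonotoneOn (lexOfSet ∘ u) (Iio κ.ord) ∨ AntitoneOn (lexOfSet ∘ u) (Iio κ.ord)) :
    ∃ Y : Set Ordinal.{0}, ∀ α < κ.ord, ∃ ξ < κ.ord, ∀ η ∈ Ico ξ κ.ord, ∀ β ≤ α,
      β ∈ u η ↔ β ∈ Y := by
  have stable : ∀ α < κ.ord, ∃ ξ < κ.ord, ∀ η ∈ Ico ξ κ.ord, ∀ β ≤ α, β ∈ u η ↔ β ∈ u ξ := by
    intro α hα
    rcases hu with hu | hu
    · exact exists_agree_of_monotoneOn hreg hu hα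
    · obtain ⟨ξ, hξ, h⟩ := exists_agree_of_monotoneOn (u := fun η => (u η)ᶜ) hreg
        (fun a ha b hb hab => lexOfSet_compl_le_compl (hu ha hb hab)) hα
      exact ⟨ξ, hξ, fun η hη β hβ => not_iff_not.mp (h η hη β hβ)⟩
  refine ⟨{β | ∃ ξ < κ.ord, ∀ η ∈ Ico ξ κ.ord, β ∈ u η}, fun α hα => ?_⟩
  obtain ⟨ξ, hξ, h⟩ := stable α hα
  refine ⟨ξ, hξ, fun η hη β hβ => ⟨fun hβη => ⟨ξ, hξ, fun η' hη' => ?_⟩, ?_⟩⟩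
  · exact (h η' hη' β hβ).mpr ((h η hη β hβ).mp hβη)
  · rintro ⟨ξ', hξ', hβu⟩
    have hη' : max ξ' η ∈ Ico ξ κ.ord := ⟨hη.1.trans (le_max_right _ _), max_lt hξ' hη.2⟩
    exact (h η hη β hβ).mpr ((h _ hη' β hβ).mp (hβu _ ⟨le_max_left _ _, hη'.2⟩))

end Stabilization

namespace WeaklyCompact

variable {κ : Cardinal.{0}}

theorem exists_strictMonoOn_comp (hwc : WeaklyCompact κ) {β : Type*} [LinearOrder β]
    {w : Ordinal.{0} → β} (hw : InjOn w (Iio κ.ord)) :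
    ∃ g : Ordinal.{0} → Ordinal.{0}, MapsTo g (Iio κ.ord) (Iio κ.ord) ∧
      StrictMonoOn g (Iio κ.ord) ∧
      (StrictMonoOn (w ∘ g) (Iio κ.ord) ∨ StrictAntiOn (w ∘ g) (Iio κ.ord)) := by
  classical
  obtain ⟨_, hA, ⟨g, hg, rfl⟩, i, hi⟩ := hwc fun α β => if w α < w β then 1 else 0
  have hmaps : MapsTo g (Iio κ.ord) (Iio κ.ord) := fun ξ hξ => hA (mem_image_of_mem g hξ)
  have hcolor : ∀ a ∈ Iio κ.ord, ∀ b ∈ Iio κ.ord, a < b →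
      (if w (g a) < w (g b) then 1 else 0 : Fin 2) = i := fun a ha b hb hab =>
    hi _ (mem_image_of_mem g ha) _ (mem_image_of_mem g hb) (hg a ha b hb hab)
  refine ⟨g, hmaps, fun a ha b hb hab => hg a ha b hb hab, ?_⟩
  obtain rfl | rfl : i = 0 ∨ i = 1 := by omega
  · refine Or.inr fun a ha b hb hab => lt_of_le_of_ne
      (le_of_not_gt fun hlt : w (g a) < w (g b) => ?_) fun heq => ?_
    · simpa [hlt] using hcolor a ha b hb hab
    · exact (hg a ha b hb hab).ne (hw (hmaps ha) (hmaps hb) heq.symm)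
  · refine Or.inl fun a ha b hb hab => by_contra fun hlt : ¬w (g a) < w (g b) => ?_
    simpa [hlt] using hcolor a ha b hb hab

theorem exists_subseq_limit (hreg : κ.IsRegular) (hwc : WeaklyCompact κ)
    {w : Ordinal.{0} → Set Ordinal.{0}} (hw : InjOn w (Iio κ.ord)) :
    ∃ g : Ordinal.{0} → Ordinal.{0}, MapsTo g (Iio κ.ord) (Iio κ.ord) ∧
      StrictMonoOn g (Iio κ.ord) ∧ ∃ Y : Set Ordinal.{0}, ∀ α < κ.ord, ∃ ξ < κ.ord,
        ∀ η ∈ Ico ξ κ.ord, ∀ β ≤ α, β ∈ w (g η) ↔ β ∈ Y := by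
  obtain ⟨g, hmaps, hg, hmono⟩ :=
    hwc.exists_strictMonoOn_comp (w := lexOfSet ∘ w) (lexOfSet_injective.comp_injOn hw)
  exact ⟨g, hmaps, hg, exists_limit_of_monotoneOn_or_antitoneOn hreg
    (hmono.imp StrictMonoOn.monotoneOn StrictAntiOn.antitoneOn)⟩

theorem exists_injOn_subset_Iio {c : Cardinal.{0}} (h : κ ≤ 2 ^ c) :
    ∃ w : Ordinal.{0} → Set Ordinal.{0}, InjOn w (Iio κ.ord) ∧ ∀ α, w α ⊆ Iio c.ord := by
  classical
  have hle : #(Iio κ.ord) ≤ #(𝒫 Iio c.ord) := by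
    rw [Cardinal.mk_powerset, Cardinal.mk_Iio_ordinal, Cardinal.mk_Iio_ordinal,
      Cardinal.card_ord, Cardinal.card_ord, ← Cardinal.lift_two_power, Cardinal.lift_le]
    exact h
  obtain ⟨f⟩ := Cardinal.le_def _ _ |>.mp hle
  refine ⟨fun α => if hα : α < κ.ord then f ⟨α, hα⟩ else ∅, fun α hα β hβ hαβ => ?_,
    fun α => ?_⟩
  · simp only [dif_pos (show α < κ.ord from hα), dif_pos (show β < κ.ord from hβ)] at hαβ
    exact congrArg Subtype.val (f.injective (Subtype.ext hαβ))
  · dsimp only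
    split_ifs
    exacts [(f _).2, empty_subset _]

theorem two_power_lt (hreg : κ.IsRegular) (hwc : WeaklyCompact κ) {c : Cardinal.{0}}
    (hc : c < κ) : 2 ^ c < κ := by
  by_contra! h
  obtain ⟨w, hw, hwsub⟩ := exists_injOn_subset_Iio h
  obtain ⟨g, hmaps, hg, Y, hY⟩ := hwc.exists_subseq_limit hreg hw
  obtain ⟨ξ, hξ, hagree⟩ := hY c.ord (Cardinal.ord_lt_ord.mpr hc)
  have hξ' : succ ξ < κ.ord := (Cardinal.isSuccLimit_ord hreg.aleph0_le).succ_lt hξ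
  have heq : w (g ξ) = w (g (succ ξ)) := by
    ext β
    by_cases hβ : β < c.ord
    · exact (hagree ξ ⟨le_rfl, hξ⟩ β hβ.le).trans (hagree _ ⟨le_succ ξ, hξ'⟩ β hβ.le).symm
    · exact iff_of_false (fun h => hβ (hwsub _ h)) (fun h => hβ (hwsub _ h))
  exact (hg hξ hξ' (lt_succ ξ)).ne (hw (hmaps hξ) (hmaps hξ') heq)

end WeaklyCompact

section Ideal

variable {κ : Cardinal.{0}} {α : Type 1} {Hm : Set (Set α)}

theorem exists_fiber_notMem (hunion : ∀ X ⊆ Hm, #X < Cardinal.lift.{1} κ → ⋃₀ X ∈ Hm)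
    {A : Set α} (hA : A ∉ Hm) {β : Type 1} (f : α → β) {S : Set β} (hf : MapsTo f A S)
    (hS : #S < Cardinal.lift.{1} κ) : ∃ y ∈ S, {b ∈ A | f b = y} ∉ Hm := by
  by_contra! h
  have hcover : ⋃₀ ((fun y => {b ∈ A | f b = y}) '' S) = A := by
    ext b
    simp only [sUnion_image, mem_iUnion, mem_ofPred_eq, exists_prop]
    exact ⟨fun ⟨_, _, hb, _⟩ => hb, fun hb => ⟨f b, hf hb, hb, rfl⟩⟩
  refine hA (hcover ▸ hunion _ ?_ (Cardinal.mk_image_le.trans_lt hS))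
  rintro _ ⟨y, hy, rfl⟩
  exact h y hy

theorem exists_trace_notMem (hreg : κ.IsRegular) (hwc : WeaklyCompact κ)
    (hunion : ∀ X ⊆ Hm, #X < Cardinal.lift.{1} κ → ⋃₀ X ∈ Hm) {A : Set α} (hA : A ∉ Hm)
    (t : α → Set Ordinal.{0}) {γ : Ordinal.{0}} (hγ : γ < κ.ord) :
    ∃ s ⊆ Iio γ, {b ∈ A | t b ∩ Iio γ = s} ∉ Hm := by
  refine exists_fiber_notMem hunion hA (fun b => t b ∩ Iio γ) (S := 𝒫 Iio γ)
    (fun _ _ => inter_subset_right) ?_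
  rw [Cardinal.mk_powerset, Cardinal.mk_Iio_ordinal, ← Cardinal.lift_two_power, Cardinal.lift_lt]
  exact hwc.two_power_lt hreg (Cardinal.lt_ord.mp hγ)

theorem exists_branch_notMem (hreg : κ.IsRegular) (hwc : WeaklyCompact κ)
    (hsub : ∀ A ∈ Hm, ∀ B ⊆ A, B ∈ Hm)
    (hunion : ∀ X ⊆ Hm, #X < Cardinal.lift.{1} κ → ⋃₀ X ∈ Hm) {A : Set α} (hA : A ∉ Hm)
    (t : α → Set Ordinal.{0}) :
    ∃ Y : Set Ordinal.{0}, ∀ δ < κ.ord, {b ∈ A | ∀ β < δ, β ∈ t b ↔ β ∈ Y} ∉ Hm := by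
  have level : ∀ γ, ∃ s : Set Ordinal.{0}, γ < κ.ord →
      s ⊆ Iio γ ∧ {b ∈ A | t b ∩ Iio γ = s} ∉ Hm := fun γ => by
    by_cases hγ : γ < κ.ord
    · obtain ⟨s, hs, hsA⟩ := exists_trace_notMem hreg hwc hunion hA t hγ
      exact ⟨s, fun _ => ⟨hs, hsA⟩⟩
    · exact ⟨∅, fun h => absurd h hγ⟩
  choose s hs using level
  -- adding the top point `γ` makes the nodes pairwise distinct
  have hw : InjOn (fun γ => insert γ (s γ)) (Iio κ.ord) := by
    have key : ∀ γ ∈ Iio κ.ord, ∀ γ', γ' ∈ insert γ (s γ) → γ' ≤ γ := fun γ hγ γ' h =>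
      h.elim le_of_eq fun h => ((hs γ hγ).1 h).le
    intro γ hγ γ' hγ' (h : insert γ (s γ) = insert γ' (s γ'))
    exact le_antisymm (key γ' hγ' γ (h ▸ mem_insert γ _)) (key γ hγ γ' (h ▸ mem_insert γ' _))
  obtain ⟨g, hmaps, hg, Y, hY⟩ := hwc.exists_subseq_limit hreg hw
  refine ⟨Y, fun δ hδ hmem => ?_⟩
  obtain ⟨ξ, hξ, hagree⟩ := hY δ hδ
  have hη : max ξ δ < κ.ord := max_lt hξ hδ
  have hδg : δ ≤ g (max ξ δ) := (le_max_right ξ δ).trans (StrictMonoOn.le_apply_of_lt hg hη)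
  refine (hs _ (hmaps hη)).2 (hsub _ hmem _ fun b ⟨hbA, hb⟩ => ⟨hbA, fun β hβ => ?_⟩)
  have hβ' : β < g (max ξ δ) := hβ.trans_le hδg
  calc β ∈ t b ↔ β ∈ s (g (max ξ δ)) := by rw [← hb]; simp [hβ']
    _ ↔ β ∈ insert (g (max ξ δ)) (s (g (max ξ δ))) := by simp [hβ'.ne]
    _ ↔ β ∈ Y := hagree _ ⟨le_max_left ξ δ, hη⟩ β hβ.le

end Ideal

section LeastCard

variable {X : Type 1} {P : Set X → Prop} {F : Set X}

theorem lift_leastCard_le (hF : P F) : Cardinal.lift.{1} (leastCard P) ≤ #F := by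
  rcases le_or_gt #F (Cardinal.lift.{1} (leastCard P)) with h | h
  · obtain ⟨c, hc⟩ := Cardinal.mem_range_lift_of_le h
    rw [← hc, Cardinal.lift_le]
    exact csInf_le' ⟨F, hF, hc⟩
  · exact h.le

theorem exists_mk_eq_lift_leastCard (hF : P F) {c : Cardinal.{0}}
    (hc : #F ≤ Cardinal.lift.{1} c) : ∃ F', P F' ∧ #F' = Cardinal.lift.{1} (leastCard P) := by
  obtain ⟨d, hd⟩ := Cardinal.mem_range_lift_of_le hc
  obtain ⟨F', hF', h⟩ := csInf_mem (s := {c : Cardinal.{0} | ∃ F, P F ∧ Cardinal.lift.{1} c = #F})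
    ⟨d, F, hF, hd⟩
  exact ⟨F', hF', h.symm⟩

end LeastCard

theorem exists_forall_mem_of_mk_lt_covM {ν ρ : Cardinal.{0}} (hν : ν ≠ 0)
    {𝒟 : Set (Set (Set Ordinal.{0}))} (h𝒟 : ∀ D ∈ 𝒟, DenseOpen ν ρ D)
    (hcard : #𝒟 < Cardinal.lift.{1} (covM ν ρ)) : ∃ x ∈ cantor ρ, ∀ D ∈ 𝒟, x ∈ D := by
  by_contra! hcov
  have hmeager : ∀ W ∈ (cantor ρ \ ·) '' 𝒟, Meager ν ρ W := by
    rintro _ ⟨D, hD, rfl⟩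
    refine ⟨sdiff_subset, {D}, singleton_nonempty D, ?_, by simpa using h𝒟 D hD, ?_⟩
    · simpa [Cardinal.one_le_iff_ne_zero] using hν
    · simp
  have hcover : ⋃₀ ((cantor ρ \ ·) '' 𝒟) = cantor ρ := by
    refine (sUnion_subset ?_).antisymm fun x hx => ?_
    · rintro _ ⟨D, -, rfl⟩
      exact sdiff_subset
    · obtain ⟨D, hD, hxD⟩ := hcov x hx
      exact ⟨_, ⟨D, hD, rfl⟩, hx, hxD⟩
  exact ((lift_leastCard_le ⟨hmeager, hcover⟩).trans Cardinal.mk_image_le).not_gt hcard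

theorem sSup_lt_ord_of_isRegular {κ : Cardinal.{0}} (hreg : κ.IsRegular) {s : Set Ordinal.{0}}
    (hs : s ⊆ Iio κ.ord) (hcard : #s < Cardinal.lift.{1} κ) : sSup s < κ.ord :=
  Ordinal.sSup_lt_of_lt_cof (by rwa [← Ordinal.lift_cof, hreg.cof_ord]) hs

def IsSelected {β : Type*} (x : Set Ordinal.{0}) (h : β → Ordinal.{0}) (G : β → Set Ordinal.{0})
    (b : β) : Prop :=
  h b ∈ x ∧ x ∩ Iio (h b) ⊆ G b

theorem denseOpen_setOf_exists_isSelected {κ : Cardinal.{0}} (hreg : κ.IsRegular) {β : Type*}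
    {B : Set β} {h : β → Ordinal.{0}} {G : β → Set Ordinal.{0}} (hh : ∀ b ∈ B, h b < κ.ord)
    (hB : ∀ δ < κ.ord, ∃ b ∈ B, δ < h b ∧ Iio δ ⊆ G b) :
    DenseOpen κ κ {x | x ⊆ Iio κ.ord ∧ ∃ b ∈ B, IsSelected x h G b} := by
  have hlim := Cardinal.isSuccLimit_ord hreg.aleph0_le
  refine ⟨fun x hx => hx.1, ?_, ?_⟩
  · rintro x ⟨hx, b, hb, hbx, hxG⟩
    have hsucc : succ (h b) < κ.ord := hlim.succ_lt (hh b hb)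
    refine ⟨Iio (succ (h b)), x ∩ Iio (succ (h b)), ⟨Iio_subset_Iio hsucc.le, inter_subset_right,
      ?_⟩, ⟨hx, rfl⟩, ?_⟩
    · rw [Cardinal.mk_Iio_ordinal, Cardinal.lift_lt]
      exact Cardinal.lt_ord.mp hsucc
    · rintro x' ⟨hx', hx'x⟩
      refine ⟨hx', b, hb, ?_, fun α ⟨hαx', hα⟩ => hxG ⟨?_, hα⟩⟩
      · exact (hx'x.symm ▸ ⟨hbx, lt_succ (h b)⟩ : h b ∈ x' ∩ Iio (succ (h b))).1
      · exact (hx'x ▸ ⟨hαx', hα.trans (lt_succ (h b))⟩ : α ∈ x ∩ Iio (succ (h b))).1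
  · rintro a s ⟨ha, hsa, hcard⟩
    obtain ⟨b, hb, hab, hG⟩ :=
      hB (succ (sSup a)) (hlim.succ_lt (sSup_lt_ord_of_isRegular hreg ha hcard))
    have hle : ∀ α ∈ a, α ≤ sSup a := fun α hα => le_csSup ⟨κ.ord, fun _ h => (ha h).le⟩ hα
    have hba : h b ∉ a := fun hba => ((hle _ hba).trans_lt (lt_succ _)).not_gt hab
    refine ⟨insert (h b) s, ⟨insert_subset (hh b hb) (hsa.trans ha), ?_⟩,
      insert_subset (hh b hb) (hsa.trans ha), b, hb, mem_insert _ _, ?_⟩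
    · rw [insert_inter_of_notMem hba, inter_eq_left.mpr hsa]
    · rintro α ⟨hαs, hα⟩
      have hαs : α ∈ s := hαs.resolve_left hα.ne
      exact hG (lt_succ_iff.mpr (hle α (hsa hαs)))

section SmallSets

variable {κ lam : Cardinal.{0}}

theorem supK_lt (hreg : κ.IsRegular) {b : Set Ordinal.{0}} (hb : b ∈ smallSet κ lam) :
    supK κ b < κ.ord :=
  sSup_lt_ord_of_isRegular hreg inter_subset_right
    ((Cardinal.mk_le_mk_of_subset inter_subset_left).trans_lt hb.2)

theorem le_supK_s14 {b : Set Ordinal.{0}} {α : Ordinal.{0}} (hαb : α ∈ b) (hα : α < κ.ord) :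
    α ≤ supK κ b :=
  le_csSup ⟨κ.ord, fun _ h => h.2.le⟩ ⟨hαb, hα⟩

theorem setOf_supK_le_mem_Ikl (hκ : ℵ₀ ≤ κ) (hle : κ ≤ lam) {δ : Ordinal.{0}}
    (hδ : δ < κ.ord) : {b ∈ smallSet κ lam | supK κ b ≤ δ} ∈ Ikl κ lam := by
  have hsucc : succ δ < κ.ord := (Cardinal.isSuccLimit_ord hκ).succ_lt hδ
  refine ⟨fun b hb => hb.1, {succ δ}, ⟨?_, ?_⟩, fun b hb hsub => ?_⟩
  · exact singleton_subset_iff.mpr (hsucc.trans_le (Cardinal.ord_le_ord.mpr hle))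
  · rw [Cardinal.mk_singleton]
    exact Cardinal.one_lt_aleph0.trans_le (by simpa using hκ)
  · exact ((le_supK_s14 (hsub rfl) hsucc).trans hb.2).not_gt (lt_succ δ)

namespace IdealP

variable (H : IdealP κ lam)

theorem union_mem (hκ : ℵ₀ ≤ κ) {C L : Set (Set Ordinal.{0})} (hC : C ∈ H.mem)
    (hL : L ∈ H.mem) : C ∪ L ∈ H.mem := by
  rw [← sUnion_pair]
  refine H.sUnion_mem _ (pair_subset hC hL) (Cardinal.mk_insert_le.trans_lt ?_)
  rw [Cardinal.mk_singleton, one_add_one_eq_two]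
  exact (Cardinal.natCast_lt_aleph0 (n := 2)).trans_le (by simpa using hκ)

theorem exists_mem_diff_lt_supK (hκ : ℵ₀ ≤ κ) (hle : κ ≤ lam) {S : Set (Set Ordinal.{0})}
    (hS : S ∉ H.mem) (hSsmall : S ⊆ smallSet κ lam) {C : Set (Set Ordinal.{0})}
    (hC : C ∈ H.mem) {δ : Ordinal.{0}} (hδ : δ < κ.ord) : ∃ b ∈ S \ C, δ < supK κ b := by
  by_contra! hall
  refine hS (H.subset_mem _ (H.union_mem hκ hC (H.fine (setOf_supK_le_mem_Ikl hκ hle hδ))) _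
    fun b hb => ?_)
  by_cases hbC : b ∈ C
  exacts [Or.inl hbC, Or.inr ⟨hSsmall hb, hall b ⟨hb, hbC⟩⟩]

theorem mk_mem_le : #H.mem ≤ Cardinal.lift.{1} ((2 : Cardinal.{0}) ^ (2 : Cardinal.{0}) ^ lam) := by
  calc #H.mem ≤ #(𝒫 smallSet κ lam) := Cardinal.mk_le_mk_of_subset H.subset_pk
    _ = 2 ^ #(smallSet κ lam) := Cardinal.mk_powerset _
    _ ≤ 2 ^ #(𝒫 Iio lam.ord) :=
      Cardinal.power_le_power_left two_ne_zero (Cardinal.mk_le_mk_of_subset fun _ ha => ha.1)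
    _ = Cardinal.lift.{1} ((2 : Cardinal.{0}) ^ (2 : Cardinal.{0}) ^ lam) := by
      rw [Cardinal.mk_powerset, Cardinal.mk_Iio_ordinal, Cardinal.card_ord,
        Cardinal.lift_two_power, Cardinal.lift_two_power]

theorem exists_cofinal_mk_eq : ∃ X ⊆ H.mem, (∀ A ∈ H.mem, ∃ B ∈ X, A ⊆ B) ∧
    #X = Cardinal.lift.{1} H.cof := by
  obtain ⟨X, ⟨hX, hcof⟩, hcard⟩ := exists_mk_eq_lift_leastCard
    (P := fun X => X ⊆ H.mem ∧ ∀ A, A ∈ H.mem ↔ ∃ B ∈ X, A ⊆ B)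
    ⟨subset_rfl, fun A =>
      ⟨fun h => ⟨A, h, subset_rfl⟩, fun ⟨B, hB, hAB⟩ => H.subset_mem B hB A hAB⟩⟩
    H.mk_mem_le
  exact ⟨X, hX, fun A hA => (hcof A).mp hA, hcard⟩

theorem exists_notMem_setOf_isSelected (hreg : κ.IsRegular) (hcof : H.cof < covM κ κ)
    {A : Set (Set Ordinal.{0})} {h : Set Ordinal.{0} → Ordinal.{0}}
    {G : Set Ordinal.{0} → Set Ordinal.{0}} (hh : ∀ b ∈ A, h b < κ.ord)
    (hdense : ∀ C ∈ H.mem, ∀ δ < κ.ord, ∃ b ∈ A \ C, δ < h b ∧ Iio δ ⊆ G b) :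
    ∃ x, {b ∈ A | IsSelected x h G b} ∉ H.mem := by
  obtain ⟨X, hX, hcofinal, hcard⟩ := H.exists_cofinal_mk_eq
  obtain ⟨x, -, hx⟩ := exists_forall_mem_of_mk_lt_covM hreg.pos.ne'
    (𝒟 := (fun C => {x | x ⊆ Iio κ.ord ∧ ∃ b ∈ A \ C, IsSelected x h G b}) '' X)
    (by rintro _ ⟨C, hC, rfl⟩
        exact denseOpen_setOf_exists_isSelected hreg (fun b hb => hh b hb.1) (hdense C (hX hC)))
    (Cardinal.mk_image_le.trans_lt (hcard ▸ Cardinal.lift_lt.mpr hcof))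
  refine ⟨x, fun hmem => ?_⟩
  obtain ⟨C, hC, hsub⟩ := hcofinal _ hmem
  obtain ⟨-, b, ⟨hbA, hbC⟩, hb⟩ := hx _ ⟨C, hC, rfl⟩
  exact hbC (hsub ⟨hbA, hb⟩)

theorem exists_homogeneous (hκ : ℵ₀ ≤ κ) {F : Ordinal.{0} → Set Ordinal.{0} → Fin 2}
    {B : Set (Set Ordinal.{0})} (hB : B ∈ H.plus) {Y : Set Ordinal.{0}}
    (hF : ∀ a ∈ B, ∀ b ∈ B, supK κ a < supK κ b → (F (supK κ a) b = 1 ↔ supK κ a ∈ Y)) :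
    ∃ B' ∈ H.plus, B' ⊆ B ∧ ∃ i, ∀ p ∈ pairsK κ B', F p.1 p.2 = i := by
  have hsplit : {b ∈ B | supK κ b ∉ Y} ∉ H.mem ∨ {b ∈ B | supK κ b ∈ Y} ∉ H.mem := by
    by_contra! h
    refine hB.2 (H.subset_mem _ (H.union_mem hκ h.1 h.2) B fun b hb => ?_)
    by_cases hbY : supK κ b ∈ Y
    exacts [Or.inr ⟨hb, hbY⟩, Or.inl ⟨hb, hbY⟩]
  rcases hsplit with h | h
  · refine ⟨_, ⟨fun b hb => hB.1 hb.1, h⟩, sep_subset _ _, 0, ?_⟩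
    rintro _ ⟨a, ha, b, hb, hab, rfl⟩
    have := (hF a ha.1 b hb.1 hab).not.mpr ha.2
    change F (supK κ a) b = 0
    omega
  · refine ⟨_, ⟨fun b hb => hB.1 hb.1, h⟩, sep_subset _ _, 1, ?_⟩
    rintro _ ⟨a, ha, b, hb, hab, rfl⟩
    exact (hF a ha.1 b hb.1 hab).mpr ha.2

end IdealP

end SmallSets

theorem arrowPConst_of_weaklyCompact_general (κ lam : Cardinal.{0}) (hreg : κ.IsRegular)
    (hlt : κ < lam) (hwc : WeaklyCompact κ) :
    ∀ H : IdealP κ lam, H.cof < covM κ κ → ArrowPConst κ lam H.mem := by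
  intro H hcof F A ⟨hAsmall, hA⟩
  obtain ⟨Y, hY⟩ := exists_branch_notMem hreg hwc H.subset_mem H.sUnion_mem hA
    fun b => {α | F α b = 1}
  obtain ⟨x, hx⟩ := H.exists_notMem_setOf_isSelected hreg hcof (h := supK κ)
    (G := fun b => {α | F α b = 1 ↔ α ∈ Y}) (fun b hb => supK_lt hreg (hAsmall hb))
    fun C hC δ hδ => by
      obtain ⟨b, ⟨⟨hbA, hbY⟩, hbC⟩, hδb⟩ := H.exists_mem_diff_lt_supK hreg.aleph0_le hlt.le
        (hY δ hδ) (fun b hb => hAsmall hb.1) hC hδ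
      exact ⟨b, ⟨hbA, hbC⟩, hδb, hbY⟩
  obtain ⟨B, hB, hBsub, hhom⟩ := H.exists_homogeneous hreg.aleph0_le
    ⟨fun b hb => hAsmall hb.1, hx⟩ fun a ha b hb hab => hb.2.2 ⟨ha.2.1, hab⟩
  exact ⟨B, hB, hBsub.trans (sep_subset _ _), hhom⟩

/-- Suppose `κ` is weakly compact. Then `H⁺ →_κ (H⁺)²` for every ideal `H` on
`P_κ(λ)` with `cof(H) < cov(M_{κ,κ})`. -/
theorem arrowPConst_of_weaklyCompact (κ lam : Cardinal.{0}) (hreg : κ.IsRegular)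
    (huc : ℵ₀ < κ) (hlt : κ < lam) (hwc : WeaklyCompact κ) :
    ∀ H : IdealP κ lam, H.cof < covM κ κ → ArrowPConst κ lam H.mem :=
  arrowPConst_of_weaklyCompact_general κ lam hreg hlt hwc

end PaperFormal
end
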